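/- Let A be an abelian category and I a set of monomorphisms in A that admits the small object argument. Then (Cok I)^⊥1 = (Cell(I))^⊥1 = (Filt-Cok I)^⊥1. -/

import Mathlib

open CategoryTheory CategoryTheory.Limits

universe w v u

namespace CellComplex

variable {C : Type u} [Category.{v} C]

/-- The inclusion of `Set.Iio g` into `Set.Iio l` for `g ≤ l`, as a functor. -/
def iioFunctor {g l : Ordinal.{w}} (h : g ≤ l) : Set.Iio g ⥤ Set.Iio l :=
  Monotone.functor (f := fun a => (⟨a.1, lt_of_lt_of_le a.2 h⟩ : Set.Iio l))
    (fun _ _ hab => hab)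

/-- For `g < l`, the canonical cocone over the restriction of `X : Set.Iio l ⥤ C` to
`Set.Iio g` whose point is `X.obj ⟨g, _⟩`. -/
def coconeAt {l : Ordinal.{w}} (X : Set.Iio l ⥤ C) {g : Ordinal.{w}} (h : g < l) :
    Cocone (iioFunctor h.le ⋙ X) where
  pt := X.obj ⟨g, h⟩
  ι :=
    { app := fun a => X.map (homOfLE (le_of_lt a.2))
      naturality := fun a b f => by
        dsimp [iioFunctor, Monotone.functor]
        rw [Category.comp_id, ← X.map_comp]
        congr 1 }

/-- A functor `X : Set.Iio l ⥤ C` is a `λ`-sequence if for every limit ordinal `g < l`,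
the object `X.obj g` together with the canonical maps is a colimit of the restriction of
`X` to `Set.Iio g`. -/
def IsLambdaSequence {l : Ordinal.{w}} (X : Set.Iio l ⥤ C) : Prop :=
  ∀ (g : Ordinal.{w}) (h : g < l), Order.IsSuccLimit g → Nonempty (IsColimit (coconeAt X h))

/-- The canonical morphism in the preorder category `Set.Iio l` from `a` to `a + 1`. -/
def toSucc {l : Ordinal.{w}} (a : Ordinal.{w}) (ha : a + 1 < l) :
    (⟨a, (lt_add_one a).trans ha⟩ : Set.Iio l) ⟶ (⟨a + 1, ha⟩ : Set.Iio l) :=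
  homOfLE (le_of_lt (lt_add_one a))

/-- All the successor maps of the sequence `X` satisfy the property `P`. -/
def SuccMapsIn (P : MorphismProperty C) {l : Ordinal.{w}} (X : Set.Iio l ⥤ C) : Prop :=
  ∀ (a : Ordinal.{w}) (ha : a + 1 < l), P (X.map (toSucc a ha))

/-- `f : A ⟶ B` is a transfinite composition of a `λ`-sequence whose successor maps
satisfy `P`: there is such a sequence starting (up to isomorphism) at `A`, having a
colimit cocone whose point is isomorphic to `B` compatibly with `f`. -/
def IsTransCompOf (P : MorphismProperty C) {A B : C} (f : A ⟶ B) : Prop :=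
  ∃ (l : Ordinal.{w}) (hl : 0 < l) (X : Set.Iio l ⥤ C),
    IsLambdaSequence X ∧ SuccMapsIn P X ∧
      ∃ (c : Cocone X) (_ : IsColimit c) (e₀ : A ≅ X.obj ⟨0, hl⟩) (e₁ : c.pt ≅ B),
        f = e₀.hom ≫ c.ι.app ⟨0, hl⟩ ≫ e₁.hom

/-- `f` is a pushout of some morphism satisfying `I`, i.e. `f` is the parallel side of a
pushout square whose other side is a morphism of `I`. -/
def IsPushoutOfIn (I : MorphismProperty C) {X Y : C} (f : X ⟶ Y) : Prop :=
  ∃ (A B : C) (d : A ⟶ B) (g : A ⟶ X) (h : B ⟶ Y), I d ∧ IsPushout d g h f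

/-- The class of pushouts of morphisms in `I`. -/
def pushouts (I : MorphismProperty C) : MorphismProperty C :=
  fun _ _ f => IsPushoutOfIn I f

/-- Transfinite compositions of pushouts of morphisms in `I` exist: pushouts of
morphisms of `I` along arbitrary morphisms exist, and every `λ`-sequence whose successor
maps are pushouts of morphisms of `I` has a colimit. -/
def HasTransfiniteCompositionsOfPushouts (I : MorphismProperty C) : Prop :=
  (∀ ⦃A B : C⦄ (d : A ⟶ B), I d → ∀ ⦃X : C⦄ (g : A ⟶ X),
      ∃ (Y : C) (h : B ⟶ Y) (f : X ⟶ Y), IsPushout d g h f) ∧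
    (∀ (l : Ordinal.{w}) (X : Set.Iio l ⥤ C), IsLambdaSequence X →
      SuccMapsIn (pushouts I) X → HasColimit X)

/-- The class `I`-cell of relative `I`-cell complexes: transfinite compositions of
pushouts of morphisms of `I`. -/
def cell (I : MorphismProperty C) : MorphismProperty C :=
  fun _ _ f => IsTransCompOf.{w} (pushouts I) f

/-- The class `I`-inj of morphisms having the right lifting property with respect to
every morphism of `I`. -/
def inj (I : MorphismProperty C) : MorphismProperty C :=
  fun _ _ p => ∀ ⦃A B : C⦄ (i : A ⟶ B), I i → HasLiftingProperty i p

/-- The class `I`-cof of morphisms having the left lifting property with respect to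
every morphism of `I`-inj. -/
def cof (I : MorphismProperty C) : MorphismProperty C :=
  fun _ _ i => ∀ ⦃X Y : C⦄ (p : X ⟶ Y), inj I p → HasLiftingProperty i p

/-- Coproducts of set-indexed families of morphisms in `I` exist: for every set-indexed
family of morphisms of `I`, the coproducts of the domains and of the codomains exist. -/
def HasCoproductsOfMorphisms (I : MorphismProperty C) : Prop :=
  ∀ (S : Type w) (A B : S → C) (i : ∀ s, A s ⟶ B s), (∀ s, I (i s)) →
    HasCoproduct A ∧ HasCoproduct B

/-- An object `A` is `κ`-small relative to a class `D` of morphisms: for every ordinal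
`l` of cofinality `> κ` and every `λ`-sequence with successor maps in `D` admitting a
colimit, the canonical map `colimᵢ Hom(A, Xᵢ) ⟶ Hom(A, colimᵢ Xᵢ)` is bijective, i.e.
every morphism from `A` to the colimit factors through some stage, and any two morphisms
to a stage which agree in the colimit agree at some later stage. -/
def IsSmallRelativeTo (κ : Cardinal.{w}) (D : MorphismProperty C) (A : C) : Prop :=
  ∀ (l : Ordinal.{w}), κ < l.cof → ∀ (X : Set.Iio l ⥤ C), IsLambdaSequence X →
    SuccMapsIn D X → ∀ (c : Cocone X), IsColimit c →
      ((∀ u : A ⟶ c.pt, ∃ (a : Set.Iio l) (v : A ⟶ X.obj a), v ≫ c.ι.app a = u) ∧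
        (∀ (a : Set.Iio l) (v₁ v₂ : A ⟶ X.obj a), v₁ ≫ c.ι.app a = v₂ ≫ c.ι.app a →
          ∃ (b : Set.Iio l) (hab : a ≤ b),
            v₁ ≫ X.map (homOfLE hab) = v₂ ≫ X.map (homOfLE hab)))

/-- The set `I` of morphisms admits the small object argument: (i) transfinite
compositions of pushouts of morphisms in `I` exist, (ii) coproducts of set-indexed
families of morphisms in `I` exist, and (iii) the domains of the morphisms of `I` are
small relative to `I`-cell. -/
def AdmitsSmallObjectArgument (I : MorphismProperty C) : Prop :=
  HasTransfiniteCompositionsOfPushouts.{w} I ∧ HasCoproductsOfMorphisms.{w} I ∧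
    ∀ ⦃A B : C⦄ (i : A ⟶ B), I i →
      ∃ κ : Cardinal.{w}, IsSmallRelativeTo κ (cell.{w} I) A

section AbelianComplete

open ZeroObject

variable {C : Type u} [Category.{v} C] [Abelian C]

/-- `0 → A → B → C' → 0` is a short exact sequence. -/
def IsShortExact {A B C' : C} (f : A ⟶ B) (g : B ⟶ C') : Prop :=
  ∃ w : f ≫ g = 0, (ShortComplex.mk f g w).ShortExact

/-- `Ext¹(X, A) = 0`, expressed by the vanishing of the Yoneda Ext group: every short
exact sequence `0 → A → E → X → 0` splits. -/
def Ext1Zero (X A : C) : Prop :=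
  ∀ ⦃E : C⦄ (f : A ⟶ E) (g : E ⟶ X), IsShortExact f g → ∃ s : X ⟶ E, s ≫ g = 𝟙 X

/-- The right `Ext¹`-orthogonal `S^⊥₁` of a class of objects `S`. -/
def rightPerp (S : Set C) : Set C := {Y | ∀ X ∈ S, Ext1Zero X Y}

/-- The left `Ext¹`-orthogonal `⊥₁S` of a class of objects `S`. -/
def leftPerp (S : Set C) : Set C := {X | ∀ Y ∈ S, Ext1Zero X Y}

/-- The class of monomorphisms whose cokernel is isomorphic to an object of `S`. -/
def monoWithCokerIn (S : Set C) : MorphismProperty C :=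
  fun _ _ f => Mono f ∧ ∃ W ∈ S, Nonempty (cokernel f ≅ W)

/-- `B` is `S`-filtered: `0 → B` is the transfinite composition of a `λ`-sequence
starting at `0` whose successor maps are monomorphisms with cokernel isomorphic to an
object of `S`. -/
def IsSFiltered (S : Set C) (B : C) : Prop :=
  ∃ (l : Ordinal.{w}) (hl : 0 < l) (X : Set.Iio l ⥤ C),
    IsLambdaSequence X ∧ SuccMapsIn (monoWithCokerIn S) X ∧ IsZero (X.obj ⟨0, hl⟩) ∧
      ∃ (c : Cocone X) (_ : IsColimit c), Nonempty (c.pt ≅ B)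

/-- `Cell(I)`: the objects `A` such that `0 ⟶ A` is a relative `I`-cell complex. -/
def CellObjects (I : MorphismProperty C) : Set C :=
  {A | cell.{w} I (0 : (0 : C) ⟶ A)}

/-- `Cok I`: the objects isomorphic to the cokernel of some morphism of `I`. -/
def CokObjects (I : MorphismProperty C) : Set C :=
  {A | ∃ (X Y : C) (i : X ⟶ Y), I i ∧ Nonempty (A ≅ cokernel i)}

/-- `I` is homological: whenever `A ⟶ 0` lies in `I`-inj, `A ∈ (Cok I)^⊥₁`. -/
def IsHomological (I : MorphismProperty C) : Prop :=
  ∀ A : C, inj I (0 : A ⟶ (0 : C)) → A ∈ rightPerp (CokObjects I)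

/-- `(𝒳, 𝒴)` is a cotorsion pair: `𝒳 = ⊥₁𝒴` and `𝒴 = 𝒳^⊥₁`. -/
def IsCotorsionPair (𝒳 𝒴 : Set C) : Prop :=
  𝒳 = leftPerp 𝒴 ∧ 𝒴 = rightPerp 𝒳

/-- The cotorsion pair `(𝒳, 𝒴)` is complete: it is a cotorsion pair with enough
projectives and enough injectives. -/
def IsCompleteCotorsionPair (𝒳 𝒴 : Set C) : Prop :=
  IsCotorsionPair 𝒳 𝒴 ∧
    (∀ A : C, ∃ (Y₀ X₀ : C) (f : Y₀ ⟶ X₀) (g : X₀ ⟶ A),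
      IsShortExact f g ∧ X₀ ∈ 𝒳 ∧ Y₀ ∈ 𝒴) ∧
    (∀ A : C, ∃ (Y₀ X₀ : C) (f : A ⟶ Y₀) (g : Y₀ ⟶ X₀),
      IsShortExact f g ∧ X₀ ∈ 𝒳 ∧ Y₀ ∈ 𝒴)

/-- `T` is a class of generators: every object admits an epimorphism from a coproduct of
a set-indexed family of objects of `T`. -/
def IsGeneratingClass (T : Set C) : Prop :=
  ∀ A : C, ∃ (S : Type w) (G : S → C) (_ : ∀ s, G s ∈ T)
    (c : Cofan G) (_ : IsColimit c) (p : c.pt ⟶ A), Epi p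

/-- `T` is closed under (set-indexed) coproducts: coproducts of families of objects of
`T` exist and belong to `T`. -/
def ClosedUnderCoproducts (T : Set C) : Prop :=
  ∀ (S : Type w) (A : S → C), (∀ s, A s ∈ T) →
    ∃ (c : Cofan A) (_ : IsColimit c), c.pt ∈ T

/-- `T` is closed under extensions. -/
def ClosedUnderExtensions (T : Set C) : Prop :=
  ∀ ⦃A B C' : C⦄ (f : A ⟶ B) (g : B ⟶ C'),
    IsShortExact f g → A ∈ T → C' ∈ T → B ∈ T

/-- `A` is a direct summand of `B`. -/
def IsDirectSummandOf (A B : C) : Prop :=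
  ∃ (s : A ⟶ B) (r : B ⟶ A), s ≫ r = 𝟙 A

end AbelianComplete


/-!
Every object of `Cok I` is a one-step cell complex, and every cell complex is `Cok I`-filtered,
since in an abelian category a pushout of a monomorphism is a monomorphism with the same
cokernel. This nests the three orthogonals. The remaining inclusion is Eklof's lemma: if
`Ext¹(coker j, Y) = 0` for a monomorphism `j`, then `j` has the left lifting property against
every epimorphism `g` with kernel `Y`. Left lifting properties survive transfinite composition,
so for a filtered `B` the map `0 ⟶ B` lifts against `g : E ⟶ B`, which splits the extension.
-/

section Orthogonality

variable {C : Type u} [Category.{v} C] [Abelian C]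

lemma rightPerp_anti {S T : Set C} (h : S ⊆ T) : rightPerp T ⊆ rightPerp S :=
  fun _ hY X hX => hY X (h hX)

lemma Ext1Zero.of_iso {X X' A : C} (e : X ≅ X') (h : Ext1Zero X A) : Ext1Zero X' A := by
  rintro E f g ⟨w, hS⟩
  have w' : f ≫ g ≫ e.inv = 0 := by rw [reassoc_of% w, zero_comp]
  have hS' : (ShortComplex.mk f (g ≫ e.inv) w').ShortExact :=
    ShortComplex.shortExact_of_iso
      (ShortComplex.isoMk (S₁ := ShortComplex.mk f g w) (Iso.refl _) (Iso.refl _) e.symm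
        (by simp) (by simp)) hS
  obtain ⟨s, hs⟩ := h f (g ≫ e.inv) ⟨w', hS'⟩
  exact ⟨e.inv ≫ s, by simp [← cancel_mono e.inv, hs]⟩

end Orthogonality

section Lifting

variable {C : Type u} [Category.{v} C] [Abelian C]

attribute [local simp] pushout.inl_desc pushout.inr_desc pushout.inl_desc_assoc
  pushout.inr_desc_assoc

/-- With `P` the pushout of `t` and `j`, the kernel of `P ⟶ B` is an extension of
`coker (E ⟶ P) ≅ coker j` by `Y`. -/
lemma shortExact_kernel_pushoutDesc {Y E B A A' : C} {f : Y ⟶ E} {g : E ⟶ B} {w : f ≫ g = 0}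
    (hS : (ShortComplex.mk f g w).ShortExact) {j : A ⟶ A'} [Mono j] {t : A ⟶ E} {b : A' ⟶ B}
    (hsq : t ≫ g = j ≫ b) :
    (ShortComplex.mk (kernel.lift (pushout.desc g b hsq) (f ≫ pushout.inl t j) (by simp [w]))
      (kernel.ι (pushout.desc g b hsq) ≫ cokernel.π (pushout.inl t j))
      (by simp)).ShortExact := by
  have := hS.mono_f
  have := hS.epi_g
  have hpo : IsPushout j t (pushout.inr t j) (pushout.inl t j) :=
    (IsPushout.of_hasPushout t j).flip
  have hinl : (ShortComplex.mk _ _ (cokernel.condition (pushout.inl t j))).Exact :=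
    ShortComplex.exact_of_g_is_cokernel _ (cokernelIsCokernel _)
  refine ShortComplex.ShortExact.mk' ?_ (mono_of_mono_fac (kernel.lift_ι _ _ _)) ?_
  · rw [ShortComplex.exact_iff_exact_up_to_refinements]
    intro T k hk
    obtain ⟨T₁, π₁, _, e, he⟩ :=
      hinl.exact_up_to_refinements (k ≫ kernel.ι _) (by simpa using hk)
    have heg : e ≫ g = 0 := by
      have := π₁ ≫= k ≫= kernel.condition (pushout.desc g b hsq)
      simp only [← Category.assoc] at this he
      simpa [he] using this
    obtain ⟨T₂, π₂, _, y, hy⟩ := hS.exact.exact_up_to_refinements e heg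
    refine ⟨T₂, π₂ ≫ π₁, inferInstance, y, ?_⟩
    dsimp at he hy ⊢
    rw [← cancel_mono (kernel.ι _)]
    simp [he, reassoc_of% hy]
  · rw [epi_iff_surjective_up_to_refinements]
    intro T q
    have := isIso_cokernel_map_of_isPushout hpo
    have : Epi (pushout.inr t j ≫ cokernel.π (pushout.inl t j)) := by
      simpa using epi_comp (cokernel.π j) (cokernel.map _ _ _ _ hpo.w)
    obtain ⟨T₁, π₁, _, a, ha⟩ := surjective_up_to_refinements_of_epi
      (pushout.inr t j ≫ cokernel.π (pushout.inl t j)) q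
    obtain ⟨T₂, π₂, _, e, he⟩ := surjective_up_to_refinements_of_epi g (a ≫ b)
    refine ⟨T₂, π₂ ≫ π₁, inferInstance,
      kernel.lift _ (π₂ ≫ a ≫ pushout.inr t j - e ≫ pushout.inl t j) (by simp [he]), ?_⟩
    simp [ha]

lemma hasLiftingProperty_of_ext1Zero {Y E B A A' : C} {f : Y ⟶ E} {g : E ⟶ B} {w : f ≫ g = 0}
    (hS : (ShortComplex.mk f g w).ShortExact) (j : A ⟶ A') [Mono j]
    (h : Ext1Zero (cokernel j) Y) : HasLiftingProperty j g := by
  refine ⟨fun {t b} sq => ?_⟩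
  have hpo : IsPushout j t (pushout.inr t j) (pushout.inl t j) :=
    (IsPushout.of_hasPushout t j).flip
  have := isIso_cokernel_map_of_isPushout hpo
  obtain ⟨σ, hσ⟩ := h.of_iso (asIso (cokernel.map _ _ _ _ hpo.w)) _ _
    ⟨_, shortExact_kernel_pushoutDesc hS sq.w⟩
  have hinl : (ShortComplex.mk _ _ (cokernel.condition (pushout.inl t j))).Exact :=
    ShortComplex.exact_of_g_is_cokernel _ (cokernelIsCokernel _)
  -- `r` retracts `P` onto `E` along the complement `σ (coker j)` of `Y` in `ker (P ⟶ B)`;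
  -- then `inr ≫ r` is the lift
  set r := hinl.lift (𝟙 _ - cokernel.π _ ≫ σ ≫ kernel.ι (pushout.desc g b sq.w))
    (by rw [Preadditive.sub_comp, Category.assoc, Category.assoc, hσ]; simp)
  have hr : r ≫ pushout.inl t j = 𝟙 _ - cokernel.π _ ≫ σ ≫ kernel.ι _ := hinl.lift_f _ _
  have hinl_r : pushout.inl t j ≫ r = 𝟙 _ := by
    rw [← cancel_mono (pushout.inl t j)]
    simp [hr]
  have hr_g : r ≫ g = pushout.desc g b sq.w :=
    calc r ≫ g = r ≫ pushout.inl t j ≫ pushout.desc g b sq.w := by simp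
      _ = pushout.desc g b sq.w := by rw [reassoc_of% hr]; simp
  exact ⟨⟨{ l := pushout.inr t j ≫ r
            fac_left := by rw [← pushout.condition_assoc, hinl_r, Category.comp_id]
            fac_right := by simp [hr_g] }⟩⟩

end Lifting

section LambdaSequence

variable {C : Type u} [Category.{v} C] {l : Ordinal.{w}} {X : Set.Iio l ⥤ C}

lemma SuccMapsIn.mono {P Q : MorphismProperty C} (hPQ : P ≤ Q) (hX : SuccMapsIn P X) :
    SuccMapsIn Q X :=
  fun a ha => hPQ _ (hX a ha)

def iioOrderIso (a : Set.Iio l) : Set.Iio a ≃o Set.Iio a.1 where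
  toFun b := ⟨b.1.1, b.2⟩
  invFun b := ⟨⟨b.1, lt_trans (Set.mem_Iio.1 b.2) a.2⟩, b.2⟩
  left_inv _ := rfl
  right_inv _ := rfl
  map_rel_iff' := Iff.rfl

lemma IsLambdaSequence.isWellOrderContinuous (hX : IsLambdaSequence X) :
    X.IsWellOrderContinuous where
  nonempty_isColimit m hm := by
    obtain ⟨hc⟩ := hX m.1 m.2 ((Set.principalSegIio l).isSuccLimit_apply_iff.2 hm)
    exact ⟨hc.whiskerEquivalence (iioOrderIso m).equivalence⟩

lemma exists_succ_eq_add_one [SuccOrder (Set.Iio l)] {a : Set.Iio l} (ha : ¬IsMax a) :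
    ∃ h : a.1 + 1 < l, Order.succ a = ⟨a.1 + 1, h⟩ := by
  obtain ⟨b, hab⟩ := not_isMax_iff.1 ha
  have h : a.1 + 1 < l := (Order.add_one_le_of_lt (show a.1 < b.1 from hab)).trans_lt b.2
  refine ⟨h, le_antisymm (Order.succ_le_of_lt (show a.1 < a.1 + 1 from lt_add_one _)) ?_⟩
  exact Order.add_one_le_of_lt (show a.1 < (Order.succ a).1 from Order.lt_succ_of_not_isMax ha)

lemma IsLambdaSequence.hasLiftingProperty_ι_app_zero (hl : 0 < l) (hX : IsLambdaSequence X)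
    {c : Cocone X} (hc : IsColimit c) {E B : C} (p : E ⟶ B)
    (hsucc : SuccMapsIn (fun _ _ i => HasLiftingProperty i p) X) :
    HasLiftingProperty (c.ι.app ⟨0, hl⟩) p := by
  let _ : OrderBot (Set.Iio l) :=
    { bot := ⟨0, hl⟩, bot_le := fun a => show 0 ≤ a.1 from zero_le }
  let _ : SuccOrder (Set.Iio l) := .ofLinearWellFoundedLT _
  have := hX.isWellOrderContinuous
  refine HasLiftingProperty.transfiniteComposition.hasLiftingProperty_ι_app_bot
    (J := Set.Iio l) hc fun a ha => ?_
  obtain ⟨h, hs⟩ := exists_succ_eq_add_one ha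
  have key : ∀ {b : Set.Iio l} (hab : a ≤ b), b = ⟨a.1 + 1, h⟩ →
      HasLiftingProperty (X.map (homOfLE hab)) p := by
    rintro _ _ rfl
    exact hsucc a.1 h
  exact key _ hs

end LambdaSequence

section Eklof

variable {C : Type u} [Category.{v} C] [Abelian C]

theorem rightPerp_subset_rightPerp_filtered (S : Set C) :
    rightPerp S ⊆ rightPerp {B | IsSFiltered.{w} S B} := by
  rintro Y hY B ⟨l, hl, X, hX, hsucc, h0, c, hc, ⟨e⟩⟩
  refine Ext1Zero.of_iso e ?_
  rintro E f g ⟨w, hS⟩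
  have : HasLiftingProperty (c.ι.app ⟨0, hl⟩) g := by
    refine hX.hasLiftingProperty_ι_app_zero hl hc g fun a ha => ?_
    obtain ⟨_, W, hW, ⟨e'⟩⟩ := hsucc a ha
    exact hasLiftingProperty_of_ext1Zero hS _ ((hY W hW).of_iso e'.symm)
  have sq : CommSq 0 (c.ι.app ⟨0, hl⟩) g (𝟙 c.pt) := ⟨h0.eq_of_src _ _⟩
  exact ⟨sq.lift, sq.fac_right⟩

end Eklof

section TwoStep

variable {C : Type u} [Category.{v} C]

open Classical in
noncomputable def iioTwoToFin (a : Set.Iio (2 : Ordinal.{w})) : Fin 2 :=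
  if a.1 = 0 then 0 else 1

lemma iioTwoToFin_monotone : Monotone iioTwoToFin.{w} := by
  intro a b hab
  unfold iioTwoToFin
  split_ifs with ha hb hb
  · exact le_rfl
  · exact zero_le_one
  · exact absurd (le_antisymm (hb ▸ (hab : a.1 ≤ b.1)) zero_le) ha
  · exact le_rfl

lemma isTransCompOf_of_mem (P : MorphismProperty C) {A B : C} (f : A ⟶ B) (hf : P f) :
    IsTransCompOf.{w} P f := by
  let F := iioTwoToFin_monotone.{w}.functor ⋙ ComposableArrows.mk₁ f
  have h0 : iioTwoToFin ⟨0, Set.mem_Iio.2 two_pos⟩ = 0 := if_pos rfl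
  have h1 : iioTwoToFin ⟨1, Set.mem_Iio.2 one_lt_two⟩ = 1 := if_neg one_ne_zero
  have htop : IsTerminal (⟨1, Set.mem_Iio.2 one_lt_two⟩ : Set.Iio (2 : Ordinal.{w})) :=
    IsTerminal.ofUniqueHom (fun a => homOfLE (show a.1 ≤ 1 from Order.lt_two_iff.1 a.2))
      (fun _ _ => Subsingleton.elim _ _)
  have hmap : ∀ {i j : Fin 2} (hij : i ≤ j), i = 0 → j = 1 →
      P ((ComposableArrows.mk₁ f).map (homOfLE hij)) := by
    rintro _ _ _ rfl rfl
    exact hf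
  refine ⟨2, two_pos, F, ?_, ?_, coconeOfDiagramTerminal htop F, colimitOfDiagramTerminal htop F,
    (ComposableArrows.mk₁ f).mapIso (eqToIso h0.symm),
    (ComposableArrows.mk₁ f).mapIso (eqToIso h1), ?_⟩
  · intro g hg hlim
    exact (lt_asymm hg (by simpa using Ordinal.natCast_lt_of_isSuccLimit hlim 2)).elim
  · intro a ha
    obtain rfl : a = 0 := by simpa using ha
    exact hmap (iioTwoToFin_monotone (leOfHom (toSucc 0 ha))) h0 (by simpa using h1)
  · -- all three factors are images under `mk₁ f` of morphisms of the thin category `Fin 2`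
    simp only [Functor.mapIso_hom, coconeOfDiagramTerminal_ι_app, F, Functor.comp_map]
    exact (congrArg _ (Subsingleton.elim (homOfLE zero_le_one) _)).trans
      (((ComposableArrows.mk₁ f).map_comp _ _).trans (congrArg _ (Functor.map_comp _ _ _)))

end TwoStep

section Cells

open ZeroObject

variable {C : Type u} [Category.{v} C] [Abelian C]

lemma isPushout_cokernel_π {X Y W : C} (i : X ⟶ Y) (e : cokernel i ≅ W) :
    IsPushout i (0 : X ⟶ 0) (cokernel.π i ≫ e.hom) (0 : 0 ⟶ W) := by
  refine .of_isColimit' ⟨by simp⟩ (PushoutCocone.IsColimit.mk _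
    (fun s => e.inv ≫ cokernel.desc i s.inl (by simp [s.condition]))
    (fun s => by simp) (fun s => (isZero_zero C).eq_of_src _ _) (fun s m hm _ => ?_))
  rw [← cancel_epi (cokernel.π i ≫ e.hom)]
  simpa using hm

lemma cokObjects_subset_cellObjects (I : MorphismProperty C) :
    CokObjects I ⊆ CellObjects.{w} I := by
  rintro W ⟨X, Y, i, hi, ⟨e⟩⟩
  exact isTransCompOf_of_mem _ _ ⟨X, Y, i, 0, _, hi, isPushout_cokernel_π i e.symm⟩

lemma pushouts_le_monoWithCokerIn {I : MorphismProperty C}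
    (hmono : ∀ ⦃X Y : C⦄ (i : X ⟶ Y), I i → Mono i) :
    pushouts I ≤ monoWithCokerIn (CokObjects I) := by
  rintro _ _ f ⟨A, B, d, g, h, hd, sq⟩
  have := isIso_cokernel_map_of_isPushout sq
  exact ⟨(MorphismProperty.monomorphisms C).of_isPushout sq.flip (hmono d hd), cokernel d,
    ⟨A, B, d, hd, ⟨Iso.refl _⟩⟩, ⟨(asIso (cokernel.map _ _ _ _ sq.w)).symm⟩⟩

lemma cellObjects_subset_filtered {I : MorphismProperty C}
    (hmono : ∀ ⦃X Y : C⦄ (i : X ⟶ Y), I i → Mono i) :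
    CellObjects.{w} I ⊆ {B | IsSFiltered.{w} (CokObjects I) B} := by
  rintro B ⟨l, hl, X, hX, hsucc, c, hc, e₀, e₁, -⟩
  exact ⟨l, hl, X, hX, hsucc.mono (pushouts_le_monoWithCokerIn hmono),
    (isZero_zero C).of_iso e₀.symm, c, hc, ⟨e₁⟩⟩

end Cells

theorem perp_cok_eq_perp_cell_eq_perp_filt_general {C : Type u} [Category.{v} C] [Abelian C]
    (I : MorphismProperty C) (hmono : ∀ ⦃X Y : C⦄ (i : X ⟶ Y), I i → Mono i) :
    rightPerp (CokObjects I) = rightPerp (CellObjects.{w} I) ∧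
      rightPerp (CokObjects I) = rightPerp {B : C | IsSFiltered.{w} (CokObjects I) B} := by
  have hcok := cokObjects_subset_cellObjects.{w} I
  have hcell := cellObjects_subset_filtered.{w} hmono
  have heklof := rightPerp_subset_rightPerp_filtered.{w} (CokObjects I)
  exact ⟨(heklof.trans (rightPerp_anti hcell)).antisymm (rightPerp_anti hcok),
    heklof.antisymm (rightPerp_anti (hcok.trans hcell))⟩

/-- If `I` is a set of monomorphisms of an abelian category admitting
the small object argument, then `(Cok I)^⊥₁ = (Cell(I))^⊥₁ = (Filt-Cok I)^⊥₁`. -/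
theorem perp_cok_eq_perp_cell_eq_perp_filt {C : Type u} [Category.{v} C] [Abelian C]
    (I : MorphismProperty C) (hmono : ∀ ⦃X Y : C⦄ (i : X ⟶ Y), I i → Mono i)
    (hI : AdmitsSmallObjectArgument.{w} I) :
    rightPerp (CokObjects I) = rightPerp (CellObjects.{w} I) ∧
      rightPerp (CokObjects I) = rightPerp {B : C | IsSFiltered.{w} (CokObjects I) B} :=
  perp_cok_eq_perp_cell_eq_perp_filt_general I hmono

end CellComplex
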